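/- Let (S, Σ) be a measurable space and κ a Markov kernel from S to S. If there exists at least one irreducibility measure for κ, then the set of irreducibility measures for κ, preordered by absolute continuity (φ ≼ φ' iff φ ≪ φ'), has a maximal element: there exists an irreducibility measure ψ for κ such that every irreducibility measure μ for κ with ψ ≪ μ satisfies μ ≪ ψ. -/

import Mathlib

open MeasureTheory ProbabilityTheory

/-- The n-fold composition of a kernel with itself (n-step transition kernel);
`kpow κ 0` is the identity kernel and `kpow κ (n+1) = κ ∘ₖ kpow κ n`. -/
noncomputable def kpow {S : Type*} [MeasurableSpace S] (κ : Kernel S S) : ℕ → Kernel S S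
  | 0 => Kernel.id
  | n + 1 => κ ∘ₖ kpow κ n

/-- A measure `φ` is an irreducibility measure for the kernel `κ` if for every
measurable set `A` with `φ A > 0` and every `x`, there is `n ≥ 1` with `κⁿ(x, A) > 0`. -/
def IsIrreducibilityMeasure {S : Type*} [MeasurableSpace S] (κ : Kernel S S)
    (φ : Measure S) : Prop :=
  ∀ A : Set S, MeasurableSet A → 0 < φ A → ∀ x : S, ∃ n : ℕ, 1 ≤ n ∧ 0 < kpow κ n x A

/-! From a nonzero irreducibility measure `φ` form the occupation measure
`ψ A = ∑ₙ ∫ κⁿ⁺¹(x, A) dφ(x)`. If `ψ A > 0` then a `φ`-positive set of starting points reaches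
`A`, and by irreducibility every point reaches that set, so `ψ` is again an irreducibility measure.
If `ψ A = 0` then `φ`-almost every point never reaches `A`, which is impossible when `μ A > 0` for
an irreducibility measure `μ`; hence `μ ≪ ψ`. If there is no nonzero irreducibility measure,
`ψ = 0` is maximal. -/

section

variable {S : Type*} [MeasurableSpace S] {κ : Kernel S S}

lemma kpow_add (κ : Kernel S S) (m n : ℕ) : kpow κ (m + n) = kpow κ m ∘ₖ kpow κ n := by
  induction m with
  | zero => rw [Nat.zero_add, kpow, Kernel.id_comp]
  | succ m ih => rw [Nat.succ_add, kpow, kpow, ih, Kernel.comp_assoc]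

lemma kpow_add_apply_pos_iff {A : Set S} (hA : MeasurableSet A) (m n : ℕ) (x : S) :
    0 < kpow κ (m + n) x A ↔ 0 < kpow κ n x (Function.support fun y ↦ kpow κ m y A) := by
  rw [kpow_add, Kernel.comp_apply' _ _ _ hA, lintegral_pos_iff_support (Kernel.measurable_coe _ hA)]

lemma isIrreducibilityMeasure_zero (κ : Kernel S S) : IsIrreducibilityMeasure κ 0 :=
  fun _ _ h ↦ absurd h (lt_irrefl 0)

noncomputable def occupationMeasure (κ : Kernel S S) (φ : Measure S) : Measure S :=
  Measure.sum fun n : ℕ ↦ φ.bind (kpow κ (n + 1))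

lemma occupationMeasure_apply (φ : Measure S) {A : Set S} (hA : MeasurableSet A) :
    occupationMeasure κ φ A = ∑' n : ℕ, ∫⁻ x, kpow κ (n + 1) x A ∂φ := by
  rw [occupationMeasure, Measure.sum_apply _ hA]
  exact tsum_congr fun n ↦ Measure.bind_apply hA (Kernel.aemeasurable _)

lemma occupationMeasure_eq_zero_iff (φ : Measure S) {A : Set S} (hA : MeasurableSet A) :
    occupationMeasure κ φ A = 0 ↔ ∀ᵐ x ∂φ, ∀ n : ℕ, kpow κ (n + 1) x A = 0 := by
  rw [occupationMeasure_apply φ hA, ENNReal.tsum_eq_zero, ae_all_iff]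
  exact forall_congr' fun n ↦ lintegral_eq_zero_iff (Kernel.measurable_coe _ hA)

lemma isIrreducibilityMeasure_occupationMeasure {φ : Measure S}
    (hφ : IsIrreducibilityMeasure κ φ) : IsIrreducibilityMeasure κ (occupationMeasure κ φ) := by
  intro A hA hψA x
  rw [occupationMeasure_apply φ hA, pos_iff_ne_zero, Ne, ENNReal.tsum_eq_zero, not_forall] at hψA
  obtain ⟨n, hn⟩ := hψA
  have hB := Kernel.measurable_coe (kpow κ (n + 1)) hA
  obtain ⟨m, hm, hreach⟩ :=
    hφ _ (measurableSet_support hB) ((lintegral_pos_iff_support hB).1 (pos_iff_ne_zero.2 hn)) x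
  exact ⟨n + 1 + m, by omega, (kpow_add_apply_pos_iff hA _ _ x).2 hreach⟩

lemma IsIrreducibilityMeasure.absolutelyContinuous_occupationMeasure {φ μ : Measure S}
    (hφ : φ ≠ 0) (hμ : IsIrreducibilityMeasure κ μ) : μ ≪ occupationMeasure κ φ := by
  refine Measure.AbsolutelyContinuous.mk fun A hA hψA ↦ ?_
  by_contra hμA
  have : (ae φ).NeBot := ae_neBot.mpr hφ
  obtain ⟨x, hx⟩ := ((occupationMeasure_eq_zero_iff φ hA).1 hψA).exists
  obtain ⟨n, hn, hpos⟩ := hμ A hA (pos_iff_ne_zero.2 hμA) x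
  obtain ⟨k, rfl⟩ := Nat.exists_eq_add_of_le' hn
  exact hpos.ne' (hx k)

end

theorem exists_maximal_element_irreducibility_measures_general
    {S : Type*} [MeasurableSpace S] (κ : Kernel S S) :
    ∃ ψ : Measure S, IsIrreducibilityMeasure κ ψ ∧
      ∀ μ : Measure S, IsIrreducibilityMeasure κ μ → ψ ≪ μ → μ ≪ ψ := by
  by_cases h : ∃ φ : Measure S, φ ≠ 0 ∧ IsIrreducibilityMeasure κ φ
  · obtain ⟨φ, hφ0, hφ⟩ := h
    exact ⟨occupationMeasure κ φ, isIrreducibilityMeasure_occupationMeasure hφ,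
      fun μ hμ _ ↦ hμ.absolutelyContinuous_occupationMeasure hφ0⟩
  · push Not at h
    refine ⟨0, isIrreducibilityMeasure_zero κ, fun μ hμ _ ↦ ?_⟩
    obtain rfl : μ = 0 := not_ne_iff.1 fun hμ0 ↦ h μ hμ0 hμ
    exact .rfl

theorem exists_maximal_element_irreducibility_measures
    {S : Type*} [MeasurableSpace S] (κ : Kernel S S) [IsMarkovKernel κ]
    (φ : Measure S) (hφ : IsIrreducibilityMeasure κ φ) :
    ∃ ψ : Measure S, IsIrreducibilityMeasure κ ψ ∧
      ∀ μ : Measure S, IsIrreducibilityMeasure κ μ → ψ ≪ μ → μ ≪ ψ :=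
  exists_maximal_element_irreducibility_measures_general κ
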